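/- arXiv:1401.3612 — 13 statements merged into one kernel-verified Lean document; each statement's English description precedes it below -/
import Mathlib

section
/- A norm on an infinite-dimensional real Banach space X is octahedral if and only if for every n ∈ ℕ, every x₁,…,xₙ ∈ S_X, and every ε > 0 there exists y ∈ S_X such that ‖xᵢ - y‖ ≥ 2 - ε for all i ∈ {1,…,n}. -/
/-!
Given a finite-dimensional subspace `E`, pick a finite `ε/2`-net of its unit sphere and a unit
vector `y` with `2 - ε/2 ≤ ‖f - y‖` for every point `f` of the net; then `2 - ε ≤ ‖u - y‖` for
every unit vector `u ∈ E`. Moving along the ray through `u`, the triangle inequality (against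
`u` when `t ≤ 1`, against `y` when `t ≥ 1`) upgrades this to `(1 - ε) (t + 1) ≤ ‖t • u - y‖`
for all `t ≥ 0`, which is the octahedral inequality. The converse is the definition applied to
the span of `x₁, …, xₙ`.
-/

open Metric

def Octahedral (X : Type*) [NormedAddCommGroup X] [NormedSpace ℝ X] : Prop :=
  ∀ (E : Submodule ℝ X), FiniteDimensional ℝ E → ∀ ε : ℝ, 0 < ε →
    ∃ y : X, ‖y‖ = 1 ∧ ∀ x ∈ E, (1 - ε) * (‖x‖ + ‖y‖) ≤ ‖x - y‖

lemma IsCompact.exists_fin_net {α : Type*} [PseudoMetricSpace α] {s : Set α} (hs : IsCompact s)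
    {δ : ℝ} (hδ : 0 < δ) :
    ∃ (n : ℕ) (f : Fin n → α), (∀ i, f i ∈ s) ∧ ∀ x ∈ s, ∃ i, dist x (f i) < δ := by
  obtain ⟨t, hts, htfin, hcov⟩ := hs.finite_cover_balls hδ
  obtain ⟨n, f, -, rfl⟩ := htfin.fin_param
  refine ⟨n, f, fun i => hts (Set.mem_range_self i), fun x hx => ?_⟩
  obtain ⟨_, ⟨i, rfl⟩, hxi⟩ := Set.mem_iUnion₂.mp (hcov hx)
  exact ⟨i, hxi⟩

section

variable {X : Type*} [NormedAddCommGroup X] [NormedSpace ℝ X]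

lemma Submodule.exists_fin_net_unitSphere (E : Submodule ℝ X) [FiniteDimensional ℝ E] {δ : ℝ}
    (hδ : 0 < δ) :
    ∃ (n : ℕ) (f : Fin n → X), (∀ i, ‖f i‖ = 1) ∧ ∀ x ∈ E, ‖x‖ = 1 → ∃ i, ‖x - f i‖ < δ := by
  obtain ⟨n, f, hf, hnet⟩ :=
    ((isCompact_sphere (0 : E) 1).image continuous_subtype_val).exists_fin_net hδ
  refine ⟨n, f, fun i => ?_, fun x hx hx1 => ?_⟩
  · obtain ⟨e, he, hef⟩ := hf i
    rw [← hef]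
    simpa using he
  · simpa [dist_eq_norm] using hnet x ⟨⟨x, hx⟩, by simpa using hx1, rfl⟩

lemma le_norm_smul_sub_of_two_sub_le_norm_sub {u y : X} (hu : ‖u‖ = 1) (hy : ‖y‖ = 1) {δ : ℝ}
    (h : 2 - δ ≤ ‖u - y‖) {t : ℝ} (ht : 0 ≤ t) :
    (1 - δ) * (t + 1) ≤ ‖t • u - y‖ := by
  have hδ : 0 ≤ δ := by
    have := norm_sub_le u y
    linarith
  rcases le_total t 1 with ht1 | ht1
  · have htri : ‖u - y‖ ≤ ‖t • u - y‖ + (1 - t) := calc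
      ‖u - y‖ = ‖(t • u - y) + (1 - t) • u‖ := by rw [sub_smul, one_smul]; abel_nf
      _ ≤ ‖t • u - y‖ + ‖(1 - t) • u‖ := norm_add_le _ _
      _ = ‖t • u - y‖ + (1 - t) := by rw [norm_smul, hu, mul_one, Real.norm_of_nonneg (by linarith)]
    nlinarith
  · have htri : t * ‖u - y‖ ≤ ‖t • u - y‖ + (t - 1) := calc
      t * ‖u - y‖ = ‖t • (u - y)‖ := by rw [norm_smul, Real.norm_of_nonneg ht]
      _ = ‖(t • u - y) - (t - 1) • y‖ := by rw [smul_sub, sub_smul, one_smul]; abel_nf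
      _ ≤ ‖t • u - y‖ + ‖(t - 1) • y‖ := norm_sub_le _ _
      _ = ‖t • u - y‖ + (t - 1) := by rw [norm_smul, hy, mul_one, Real.norm_of_nonneg (by linarith)]
    nlinarith

lemma Octahedral.exists_two_sub_le_norm_sub (hX : Octahedral X) {n : ℕ} (x : Fin n → X)
    (hx : ∀ i, ‖x i‖ = 1) {ε : ℝ} (hε : 0 < ε) :
    ∃ y : X, ‖y‖ = 1 ∧ ∀ i, 2 - ε ≤ ‖x i - y‖ := by
  obtain ⟨y, hy, hxy⟩ :=
    hX _ (FiniteDimensional.span_of_finite ℝ (Set.finite_range x)) (ε / 2) (half_pos hε)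
  refine ⟨y, hy, fun i => ?_⟩
  have := hxy (x i) (Submodule.subset_span (Set.mem_range_self i))
  rw [hx i, hy] at this
  linarith

lemma octahedral_of_exists_two_sub_le_norm_sub
    (H : ∀ (n : ℕ) (x : Fin n → X), (∀ i, ‖x i‖ = 1) → ∀ ε : ℝ, 0 < ε →
      ∃ y : X, ‖y‖ = 1 ∧ ∀ i, 2 - ε ≤ ‖x i - y‖) :
    Octahedral X := by
  intro E hE ε hε
  obtain ⟨n, f, hf, hnet⟩ := E.exists_fin_net_unitSphere (half_pos hε)
  obtain ⟨y, hy, hfy⟩ := H n f hf (ε / 2) (half_pos hε)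
  refine ⟨y, hy, fun x hx => ?_⟩
  rcases eq_or_ne x 0 with rfl | hx0
  · simp only [norm_zero, zero_sub, norm_neg, hy]
    linarith
  have hu : ‖‖x‖⁻¹ • x‖ = 1 := norm_smul_inv_norm hx0
  obtain ⟨i, hi⟩ := hnet _ (E.smul_mem _ hx) hu
  have huy : 2 - ε ≤ ‖‖x‖⁻¹ • x - y‖ := by
    linarith [hfy i, norm_sub_le_norm_sub_add_norm_sub (f i) (‖x‖⁻¹ • x) y,
      norm_sub_rev (‖x‖⁻¹ • x) (f i)]
  simpa [hy, smul_inv_smul₀ (norm_ne_zero_iff.mpr hx0)] using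
    le_norm_smul_sub_of_two_sub_le_norm_sub hu hy huy (norm_nonneg x)

end

theorem stmt0_general {X : Type*} [NormedAddCommGroup X] [NormedSpace ℝ X] :
    Octahedral X ↔
      ∀ (n : ℕ) (x : Fin n → X), (∀ i, ‖x i‖ = 1) → ∀ ε : ℝ, 0 < ε →
        ∃ y : X, ‖y‖ = 1 ∧ ∀ i, 2 - ε ≤ ‖x i - y‖ :=
  ⟨fun hX _ x hx _ hε => hX.exists_two_sub_le_norm_sub x hx hε,
    octahedral_of_exists_two_sub_le_norm_sub⟩

theorem stmt0 {X : Type*} [NormedAddCommGroup X] [NormedSpace ℝ X] [CompleteSpace X]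
    (hinf : ¬ FiniteDimensional ℝ X) :
    Octahedral X ↔
      ∀ (n : ℕ) (x : Fin n → X), (∀ i, ‖x i‖ = 1) → ∀ ε : ℝ, 0 < ε →
        ∃ y : X, ‖y‖ = 1 ∧ ∀ i, 2 - ε ≤ ‖x i - y‖ :=
  stmt0_general
end

section
/- The norm on a Banach space X is octahedral if and only if μ₂(X) = 2, where μ₂(X) = inf over finite sequences x₁,…,xₙ ∈ S_X of sup_{x ∈ S_X} (1/n) Σᵢ ‖xᵢ - x‖. -/
/-!
Both conditions are equivalent to: for every finite family of unit vectors `x₁, …, xₙ` and every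
`ε > 0` there is a unit vector `y` with `‖xᵢ - y‖ ≥ 2 - ε` for all `i`.

For the octahedral norm, one direction tests the definition on the span of the `xᵢ`. Conversely,
a finite `ε`-net of the (compact) unit sphere of a finite-dimensional `E` upgrades the condition
to all unit vectors of `E`, and homogeneity turns `‖u - y‖ ≥ 2 - ε` on the sphere into
`‖x - y‖ ≥ (1 - ε)(‖x‖ + ‖y‖)` on `E`.

For `μ₂`, an average of terms bounded by `2` is close to `2` exactly when every term is, up to a
factor `n` in the error.
-/

open Metric

noncomputable def mu2 (X : Type*) [NormedAddCommGroup X] : ℝ :=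
  sInf {c : ℝ | ∃ (n : ℕ) (x : Fin (n + 1) → X), (∀ i, ‖x i‖ = 1) ∧
    c = sSup {s : ℝ | ∃ z : X, ‖z‖ = 1 ∧ s = (1 / (n + 1 : ℝ)) * ∑ i, ‖x i - z‖}}

open Set

def UnitSphereFarFromFinite (X : Type*) [NormedAddCommGroup X] : Prop :=
  ∀ (n : ℕ) (x : Fin n → X), (∀ i, ‖x i‖ = 1) → ∀ ε : ℝ, 0 < ε →
    ∃ y : X, ‖y‖ = 1 ∧ ∀ i, 2 - ε ≤ ‖x i - y‖

section

variable {X : Type*} [NormedAddCommGroup X] [NormedSpace ℝ X]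

lemma le_norm_smul_sub_of_le_norm_sub {u z : X} {t δ : ℝ} (hu : ‖u‖ = 1) (hz : ‖z‖ = 1)
    (ht : 0 ≤ t) (hδ : 0 ≤ δ) (h : 2 - δ ≤ ‖u - z‖) : (1 - δ) * (t + 1) ≤ ‖t • u - z‖ := by
  rcases le_total t 1 with ht1 | ht1
  · have hut : ‖u - t • u‖ = 1 - t := by
      rw [show u - t • u = (1 - t) • u by rw [sub_smul, one_smul], norm_smul, hu,
        Real.norm_of_nonneg (by linarith), mul_one]
    calc (1 - δ) * (t + 1) ≤ ‖u - z‖ - ‖u - t • u‖ := by rw [hut]; nlinarith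
      _ ≤ ‖t • u - z‖ := by linarith [norm_sub_le_norm_sub_add_norm_sub u (t • u) z]
  · have hzt : ‖z - t • z‖ = t - 1 := by
      rw [← norm_neg, neg_sub, show t • z - z = (t - 1) • z by rw [sub_smul, one_smul],
        norm_smul, hz, Real.norm_of_nonneg (by linarith), mul_one]
    calc (1 - δ) * (t + 1) ≤ t * ‖u - z‖ - (t - 1) := by nlinarith
      _ = ‖t • u - t • z‖ - ‖z - t • z‖ := by
        rw [← smul_sub, norm_smul, Real.norm_of_nonneg ht, hzt]
      _ ≤ ‖t • u - z‖ := by linarith [norm_sub_le_norm_sub_add_norm_sub (t • u) z (t • z)]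

lemma add_norm_le_norm_sub_of_far_from_sphere {E : Submodule ℝ X} {z : X} {δ : ℝ} (hδ : 0 ≤ δ)
    (hz : ‖z‖ = 1) (h : ∀ u ∈ E, ‖u‖ = 1 → 2 - δ ≤ ‖u - z‖) {x : X} (hx : x ∈ E) :
    (1 - δ) * (‖x‖ + ‖z‖) ≤ ‖x - z‖ := by
  rcases eq_or_ne x 0 with rfl | hx0
  · simp only [norm_zero, zero_sub, norm_neg, hz]
    linarith
  · have hu : ‖‖x‖⁻¹ • x‖ = 1 := norm_smul_inv_norm hx0
    have key := le_norm_smul_sub_of_le_norm_sub hu hz (norm_nonneg x) hδ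
      (h _ (E.smul_mem _ hx) hu)
    rw [hz]
    rwa [smul_inv_smul₀ (norm_ne_zero_iff.mpr hx0)] at key

lemma UnitSphereFarFromFinite.exists_far_from_sphere (hX : UnitSphereFarFromFinite X)
    (E : Submodule ℝ X) [FiniteDimensional ℝ E] {ε : ℝ} (hε : 0 < ε) :
    ∃ y : X, ‖y‖ = 1 ∧ ∀ u ∈ E, ‖u‖ = 1 → 2 - ε ≤ ‖u - y‖ := by
  have hcpt : IsCompact ((↑) '' sphere (0 : E) 1 : Set X) :=
    (isCompact_sphere 0 1).image continuous_subtype_val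
  obtain ⟨t, htS, htfin, htcov⟩ :=
    finite_approx_of_totallyBounded hcpt.totallyBounded (ε / 2) (half_pos hε)
  obtain ⟨n, f, rfl⟩ := htfin.fin_embedding
  have hf : ∀ i, ‖f i‖ = 1 := fun i => by
    obtain ⟨v, hv, hvf⟩ := htS (mem_range_self i)
    rw [← hvf]
    exact mem_sphere_zero_iff_norm.mp hv
  obtain ⟨y, hy, hfar⟩ := hX n f hf (ε / 2) (half_pos hε)
  refine ⟨y, hy, fun u hu hu1 => ?_⟩
  have hucov : u ∈ ⋃ p ∈ range f, ball p (ε / 2) :=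
    htcov ⟨⟨u, hu⟩, mem_sphere_zero_iff_norm.mpr hu1, rfl⟩
  obtain ⟨_, ⟨i, rfl⟩, hui⟩ := mem_iUnion₂.mp hucov
  rw [mem_ball, dist_eq_norm] at hui
  linarith [hfar i, norm_sub_le_norm_sub_add_norm_sub (f i) u y, norm_sub_rev u (f i)]

theorem octahedral_iff_unitSphereFarFromFinite :
    Octahedral X ↔ UnitSphereFarFromFinite X := by
  constructor
  · intro hX n x hx ε hε
    obtain ⟨y, hy, hxy⟩ := hX (Submodule.span ℝ (range x))
      (FiniteDimensional.span_of_finite ℝ (finite_range x)) (ε / 2) (half_pos hε)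
    refine ⟨y, hy, fun i => ?_⟩
    have hi := hxy (x i) (Submodule.subset_span (mem_range_self i))
    rw [hx i, hy] at hi
    linarith
  · intro hX E hE ε hε
    obtain ⟨y, hy, hfar⟩ := hX.exists_far_from_sphere E hε
    exact ⟨y, hy, fun x hx => add_norm_le_norm_sub_of_far_from_sphere hε.le hy hfar hx⟩

end

section

variable {X : Type*} [NormedAddCommGroup X]

noncomputable def sphereAvgSup {n : ℕ} (x : Fin (n + 1) → X) : ℝ :=
  sSup {s : ℝ | ∃ z : X, ‖z‖ = 1 ∧ s = (1 / (n + 1 : ℝ)) * ∑ i, ‖x i - z‖}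

lemma mu2_eq_sInf_sphereAvgSup :
    mu2 X = sInf {c : ℝ | ∃ (n : ℕ) (x : Fin (n + 1) → X), (∀ i, ‖x i‖ = 1) ∧
      c = sphereAvgSup x} := rfl

lemma sphereAvgSup_nonneg {n : ℕ} (x : Fin (n + 1) → X) : 0 ≤ sphereAvgSup x :=
  Real.sSup_nonneg (by rintro _ ⟨z, -, rfl⟩; positivity)

lemma norm_sub_le_two {x z : X} (hx : ‖x‖ = 1) (hz : ‖z‖ = 1) : ‖x - z‖ ≤ 2 :=
  (norm_sub_le x z).trans (by rw [hx, hz]; norm_num)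

lemma avg_norm_sub_le_two {n : ℕ} {x : Fin (n + 1) → X} (hx : ∀ i, ‖x i‖ = 1) {z : X}
    (hz : ‖z‖ = 1) : (1 / (n + 1 : ℝ)) * ∑ i, ‖x i - z‖ ≤ 2 := by
  have hsum : ∑ i, ‖x i - z‖ ≤ (n + 1) * 2 := by
    calc ∑ i, ‖x i - z‖ ≤ ∑ _i : Fin (n + 1), (2 : ℝ) :=
          Finset.sum_le_sum fun i _ => norm_sub_le_two (hx i) hz
      _ = (n + 1) * 2 := by simp
  rw [one_div_mul_eq_div, div_le_iff₀ (by positivity)]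
  linarith

lemma sphereAvgSup_le_two {n : ℕ} {x : Fin (n + 1) → X} (hx : ∀ i, ‖x i‖ = 1) :
    sphereAvgSup x ≤ 2 :=
  Real.sSup_le (by rintro _ ⟨z, hz, rfl⟩; exact avg_norm_sub_le_two hx hz) zero_le_two

lemma two_le_sphereAvgSup_iff {n : ℕ} {x : Fin (n + 1) → X} (hx : ∀ i, ‖x i‖ = 1) :
    2 ≤ sphereAvgSup x ↔ ∀ ε : ℝ, 0 < ε → ∃ z : X, ‖z‖ = 1 ∧ ∀ i, 2 - ε ≤ ‖x i - z‖ := by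
  have hn : (0 : ℝ) < n + 1 := by positivity
  constructor
  · intro h ε hε
    have hne : {s : ℝ | ∃ z : X, ‖z‖ = 1 ∧ s = (1 / (n + 1 : ℝ)) * ∑ i, ‖x i - z‖}.Nonempty := by
      by_contra hempty
      rw [sphereAvgSup, not_nonempty_iff_eq_empty.mp hempty, Real.sSup_empty] at h
      norm_num at h
    obtain ⟨_, ⟨z, hz, rfl⟩, hlt⟩ :=
      exists_lt_of_lt_csSup hne (show 2 - ε / (n + 1) < sphereAvgSup x by
        linarith [div_pos hε hn])
    rw [one_div_mul_eq_div, lt_div_iff₀ hn, sub_mul, div_mul_cancel₀ _ hn.ne'] at hlt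
    refine ⟨z, hz, fun j => ?_⟩
    -- every defect `2 - ‖xᵢ - z‖` is nonnegative, so each is at most their sum
    have hj : 2 - ‖x j - z‖ ≤ ∑ i, (2 - ‖x i - z‖) :=
      Finset.single_le_sum (fun i _ => sub_nonneg.mpr (norm_sub_le_two (hx i) hz))
        (Finset.mem_univ j)
    rw [Finset.sum_sub_distrib] at hj
    simp only [Finset.sum_const, Finset.card_univ, Fintype.card_fin, nsmul_eq_mul,
      Nat.cast_add, Nat.cast_one] at hj
    linarith
  · intro h
    refine le_of_forall_sub_le fun ε hε => ?_
    obtain ⟨z, hz, hfar⟩ := h ε hε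
    have hsum : (n + 1) * (2 - ε) ≤ ∑ i, ‖x i - z‖ := by
      calc (n + 1) * (2 - ε) = ∑ _i : Fin (n + 1), (2 - ε) := by simp [mul_sub]
        _ ≤ ∑ i, ‖x i - z‖ := Finset.sum_le_sum fun i _ => hfar i
    calc 2 - ε ≤ (1 / (n + 1 : ℝ)) * ∑ i, ‖x i - z‖ := by
          rw [one_div_mul_eq_div, le_div_iff₀ hn]
          linarith
      _ ≤ sphereAvgSup x :=
          le_csSup ⟨2, by rintro _ ⟨w, hw, rfl⟩; exact avg_norm_sub_le_two hx hw⟩ ⟨z, hz, rfl⟩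

theorem mu2_eq_two_iff_unitSphereFarFromFinite : mu2 X = 2 ↔ UnitSphereFarFromFinite X := by
  rw [mu2_eq_sInf_sphereAvgSup]
  constructor
  · intro h n x hx ε hε
    obtain ⟨_, _, w, hw, -⟩ : {c : ℝ | ∃ (n : ℕ) (x : Fin (n + 1) → X), (∀ i, ‖x i‖ = 1) ∧
        c = sphereAvgSup x}.Nonempty := by
      by_contra hempty
      rw [not_nonempty_iff_eq_empty.mp hempty, Real.sInf_empty] at h
      norm_num at h
    have hx' : ∀ i, ‖(Fin.cons (w 0) x : Fin (n + 1) → X) i‖ = 1 := Fin.cases (hw 0) hx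
    have h2 : 2 ≤ sphereAvgSup (Fin.cons (w 0) x : Fin (n + 1) → X) :=
      h ▸ csInf_le ⟨0, by rintro _ ⟨_, _, _, rfl⟩; exact sphereAvgSup_nonneg _⟩
        ⟨n, _, hx', rfl⟩
    obtain ⟨z, hz, hfar⟩ := (two_le_sphereAvgSup_iff hx').mp h2 ε hε
    exact ⟨z, hz, fun i => hfar i.succ⟩
  · intro hX
    obtain ⟨y, hy, -⟩ := hX 0 Fin.elim0 Fin.rec0 1 one_pos
    have hsup : ∀ {n : ℕ} {x : Fin (n + 1) → X}, (∀ i, ‖x i‖ = 1) → sphereAvgSup x = 2 :=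
      fun hx => (sphereAvgSup_le_two hx).antisymm
        ((two_le_sphereAvgSup_iff hx).mpr (hX _ _ hx))
    have hset : {c : ℝ | ∃ (n : ℕ) (x : Fin (n + 1) → X), (∀ i, ‖x i‖ = 1) ∧
        c = sphereAvgSup x} = {2} := by
      refine eq_singleton_iff_unique_mem.mpr ⟨⟨0, fun _ => y, fun _ => hy, ?_⟩, ?_⟩
      · exact (hsup fun _ => hy).symm
      · rintro _ ⟨n, x, hx, rfl⟩
        exact hsup hx
    rw [hset, csInf_singleton]

end

theorem stmt1_general {X : Type*} [NormedAddCommGroup X] [NormedSpace ℝ X] :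
    Octahedral X ↔ mu2 X = 2 :=
  octahedral_iff_unitSphereFarFromFinite.trans mu2_eq_two_iff_unitSphereFarFromFinite.symm

theorem stmt1 {X : Type*} [NormedAddCommGroup X] [NormedSpace ℝ X] [CompleteSpace X] :
    Octahedral X ↔ mu2 X = 2 :=
  stmt1_general
end

section
/- If the norm on a Banach space X is octahedral, then whenever finitely many closed balls B(x₁,r₁),…,B(xₙ,rₙ) (with centers xᵢ ∈ X and radii rᵢ > 0) cover the unit sphere S_X, there exists an index i such that S_X ⊆ B(xᵢ, rᵢ) (equivalently, rᵢ ≥ ‖xᵢ‖ + 1). -/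
/-! If no ball contains the sphere, then `r i < ‖x i‖ + 1` for every `i`, so for `ε` small enough
`r i < (1 - ε) (‖x i‖ + 1)` for all `i` at once. Octahedrality applied to the span of the centers
gives a unit vector `y` with `‖x i - y‖ ≥ (1 - ε) (‖x i‖ + 1) > r i` for every `i`: a point of the
sphere outside all the balls. -/

open Metric

open Filter Topology

namespace Octahedral

variable {X : Type*} [NormedAddCommGroup X] [NormedSpace ℝ X] {ι : Type*} [Finite ι]

theorem exists_norm_eq_one_forall_le_norm_sub (hoct : Octahedral X) (x : ι → X) {ε : ℝ}
    (hε : 0 < ε) : ∃ y : X, ‖y‖ = 1 ∧ ∀ i, (1 - ε) * (‖x i‖ + 1) ≤ ‖x i - y‖ := by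
  have : FiniteDimensional ℝ (Submodule.span ℝ (Set.range x)) :=
    FiniteDimensional.span_of_finite ℝ (Set.finite_range x)
  obtain ⟨y, hy, hfar⟩ := hoct _ this ε hε
  exact ⟨y, hy, fun i => hy ▸ hfar (x i) (Submodule.subset_span ⟨i, rfl⟩)⟩

theorem exists_mem_sphere_forall_notMem_closedBall (hoct : Octahedral X) (x : ι → X)
    {r : ι → ℝ} (hr : ∀ i, r i < ‖x i‖ + 1) :
    ∃ y ∈ sphere (0 : X) 1, ∀ i, y ∉ closedBall (x i) (r i) := by
  have hsmall : ∀ᶠ ε in 𝓝[>] (0 : ℝ), 0 < ε ∧ ∀ i, r i < (1 - ε) * (‖x i‖ + 1) := by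
    refine (eventually_mem_nhdsWithin (s := Set.Ioi 0)).and (eventually_all.2 fun i => ?_)
    have hlim : Tendsto (fun ε : ℝ => (1 - ε) * (‖x i‖ + 1)) (𝓝 0) (𝓝 (‖x i‖ + 1)) := by
      exact (by fun_prop : Continuous fun ε : ℝ => (1 - ε) * (‖x i‖ + 1)).tendsto' 0 _ (by ring)
    exact nhdsWithin_le_nhds (hlim.eventually (lt_mem_nhds (hr i)))
  obtain ⟨ε, hε, hlt⟩ := hsmall.exists
  obtain ⟨y, hy, hfar⟩ := hoct.exists_norm_eq_one_forall_le_norm_sub x hε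
  refine ⟨y, mem_sphere_zero_iff_norm.2 hy, fun i hi => ?_⟩
  rw [mem_closedBall, dist_comm, dist_eq_norm] at hi
  linarith [hlt i, hfar i]

end Octahedral

theorem stmt2_general {X : Type*} [NormedAddCommGroup X] [NormedSpace ℝ X]
    (hoct : Octahedral X) (n : ℕ) (x : Fin n → X) (r : Fin n → ℝ)
    (hcov : sphere (0 : X) 1 ⊆ ⋃ i, closedBall (x i) (r i)) :
    ∃ i, sphere (0 : X) 1 ⊆ closedBall (x i) (r i) ∧ ‖x i‖ + 1 ≤ r i := by
  obtain ⟨i, hi⟩ : ∃ i, ‖x i‖ + 1 ≤ r i := by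
    by_contra! hsmall
    obtain ⟨y, hy, hmiss⟩ := hoct.exists_mem_sphere_forall_notMem_closedBall x hsmall
    obtain ⟨i, hyi⟩ := Set.mem_iUnion.1 (hcov hy)
    exact hmiss i hyi
  refine ⟨i, sphere_subset_closedBall.trans (closedBall_subset_closedBall' ?_), hi⟩
  rwa [dist_zero_left, add_comm]

theorem stmt2 {X : Type*} [NormedAddCommGroup X] [NormedSpace ℝ X] [CompleteSpace X]
    (hoct : Octahedral X) (n : ℕ) (x : Fin n → X) (r : Fin n → ℝ) (hr : ∀ i, 0 < r i)
    (hcov : sphere (0 : X) 1 ⊆ ⋃ i, closedBall (x i) (r i)) :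
    ∃ i, sphere (0 : X) 1 ⊆ closedBall (x i) (r i) ∧ ‖x i‖ + 1 ≤ r i :=
  stmt2_general hoct n x r hcov
end

section
/- Suppose X is a Banach space such that whenever finitely many closed balls centered at points of S_X cover S_X, one of the balls contains all of S_X. Then the norm on X is octahedral. -/
/-! If no unit vector were at distance nearly `2` from every point of a finite set `s` of unit
vectors, the closed balls of some radius `r < 2` around the points of `s` would cover the sphere;
by hypothesis one of them would then contain the whole sphere, yet it misses the antipode of its
centre. Compactness of the unit sphere of a finite-dimensional subspace passes from finite sets to
subspaces, and the triangle inequality passes from unit vectors to arbitrary ones. -/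

open Metric

/-- The finite-set criterion for octahedral norms. -/
def HasAlmostDiametralUnitVectors (X : Type*) [NormedAddCommGroup X] : Prop :=
  ∀ s : Finset X, (∀ x ∈ s, ‖x‖ = 1) → ∀ ε : ℝ, 0 < ε →
    ∃ y : X, ‖y‖ = 1 ∧ ∀ x ∈ s, 2 - ε ≤ ‖x - y‖

section

variable {X : Type*} [NormedAddCommGroup X]

theorem HasAlmostDiametralUnitVectors.exists_of_isCompact (hX : HasAlmostDiametralUnitVectors X)
    {K : Set X} (hK : IsCompact K) (hK1 : K ⊆ sphere 0 1) {ε : ℝ} (hε : 0 < ε) :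
    ∃ y : X, ‖y‖ = 1 ∧ ∀ u ∈ K, 2 - ε ≤ ‖u - y‖ := by
  obtain ⟨t, htK, hcover⟩ :=
    hK.elim_nhds_subcover (fun z => ball z (ε / 2)) fun z _ => ball_mem_nhds z (by positivity)
  obtain ⟨y, hy, hfar⟩ :=
    hX t (fun z hz => mem_sphere_zero_iff_norm.1 (hK1 (htK z hz))) (ε / 2) (by positivity)
  refine ⟨y, hy, fun u hu => ?_⟩
  obtain ⟨z, hz, hzu⟩ := Set.mem_iUnion₂.1 (hcover hu)
  rw [mem_ball, dist_eq_norm] at hzu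
  have := norm_sub_le_norm_sub_add_norm_sub z u y
  rw [norm_sub_rev z u] at this
  linarith [hfar z hz]

variable [NormedSpace ℝ X]

theorem one_sub_mul_add_one_le_norm_smul_sub {u y : X} {ε T : ℝ} (hu : ‖u‖ ≤ 1)
    (hy : ‖y‖ = 1) (hε : 0 ≤ ε) (hT : 0 ≤ T) (hfar : 2 - ε ≤ ‖u - y‖) :
    (1 - ε) * (T + 1) ≤ ‖T • u - y‖ := by
  rcases le_total T 1 with hT1 | hT1
  · have hshrink : ‖u - T • u‖ ≤ 1 - T := by
      rw [show u - T • u = (1 - T) • u by module, norm_smul, Real.norm_of_nonneg (by linarith)]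
      exact mul_le_of_le_one_right (by linarith) hu
    have := norm_sub_le_norm_sub_add_norm_sub u (T • u) y
    nlinarith
  · have hstretch : T * ‖u - y‖ ≤ ‖T • u - y‖ + (T - 1) := by
      have := norm_sub_le_norm_sub_add_norm_sub (T • u) y (T • y)
      rwa [← smul_sub, norm_smul, Real.norm_of_nonneg hT, show y - T • y = (1 - T) • y by module,
        norm_smul, hy, mul_one, Real.norm_of_nonpos (by linarith), neg_sub] at this
    nlinarith

theorem hasAlmostDiametralUnitVectors_of_sphere_cover
    (h : ∀ (n : ℕ) (x : Fin n → X) (r : Fin n → ℝ), (∀ i, ‖x i‖ = 1) → (∀ i, 0 < r i) →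
      sphere (0 : X) 1 ⊆ ⋃ i, closedBall (x i) (r i) →
      ∃ i, sphere (0 : X) 1 ⊆ closedBall (x i) (r i)) :
    HasAlmostDiametralUnitVectors X := by
  intro s hs ε hε
  by_contra! hnear
  set r := 2 - min ε 1
  let x : Fin s.card → X := fun i => s.equivFin.symm i
  have hx : ∀ i, ‖x i‖ = 1 := fun i => hs _ (s.equivFin.symm i).2
  have hcover : sphere (0 : X) 1 ⊆ ⋃ i, closedBall (x i) r := by
    intro y hy
    obtain ⟨z, hz, hzy⟩ := hnear y (mem_sphere_zero_iff_norm.1 hy)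
    refine Set.mem_iUnion.2 ⟨s.equivFin ⟨z, hz⟩, ?_⟩
    rw [mem_closedBall, dist_comm, dist_eq_norm]
    simp only [x, Equiv.symm_apply_apply]
    linarith [min_le_left ε 1]
  obtain ⟨i, hi⟩ := h _ x (fun _ => r) hx (fun _ => by linarith [min_le_right ε 1]) hcover
  have hanti := hi (show -x i ∈ sphere (0 : X) 1 by simp [hx i])
  rw [mem_closedBall, dist_eq_norm, ← neg_add', ← two_smul ℝ, norm_neg, norm_smul, hx i]
    at hanti
  norm_num at hanti
  linarith [lt_min hε one_pos]

theorem HasAlmostDiametralUnitVectors.octahedral (hX : HasAlmostDiametralUnitVectors X) :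
    Octahedral X := by
  intro E _ ε hε
  obtain ⟨y, hy, hfar⟩ := hX.exists_of_isCompact
    ((isCompact_sphere (0 : E) 1).image continuous_subtype_val)
    (by rintro _ ⟨v, hv, rfl⟩; simpa using hv) hε
  refine ⟨y, hy, fun x hxE => ?_⟩
  rcases eq_or_ne x 0 with rfl | hx0
  · simp [hy, hε.le]
  have hxpos : 0 < ‖x‖ := norm_pos_iff.2 hx0
  have hu : ‖‖x‖⁻¹ • x‖ = 1 := by rw [norm_smul, norm_inv, norm_norm, inv_mul_cancel₀ hxpos.ne']
  have huK : ‖x‖⁻¹ • x ∈ Subtype.val '' sphere (0 : E) 1 :=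
    ⟨⟨_, E.smul_mem _ hxE⟩, by simpa using hu, rfl⟩
  have := one_sub_mul_add_one_le_norm_smul_sub hu.le hy hε.le (norm_nonneg x) (hfar _ huK)
  rw [smul_inv_smul₀ hxpos.ne'] at this
  rwa [hy]

end

theorem stmt3_general {X : Type*} [NormedAddCommGroup X] [NormedSpace ℝ X]
    (h : ∀ (n : ℕ) (x : Fin n → X) (r : Fin n → ℝ), (∀ i, ‖x i‖ = 1) → (∀ i, 0 < r i) →
      sphere (0 : X) 1 ⊆ ⋃ i, closedBall (x i) (r i) →
      ∃ i, sphere (0 : X) 1 ⊆ closedBall (x i) (r i)) :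
    Octahedral X :=
  (hasAlmostDiametralUnitVectors_of_sphere_cover h).octahedral

theorem stmt3 {X : Type*} [NormedAddCommGroup X] [NormedSpace ℝ X] [CompleteSpace X]
    (h : ∀ (n : ℕ) (x : Fin n → X) (r : Fin n → ℝ), (∀ i, ‖x i‖ = 1) → (∀ i, 0 < r i) →
      sphere (0 : X) 1 ⊆ ⋃ i, closedBall (x i) (r i) →
      ∃ i, sphere (0 : X) 1 ⊆ closedBall (x i) (r i)) :
    Octahedral X :=
  stmt3_general h
end

section
/- In an infinite-dimensional Banach space X, any finite covering of the unit sphere S_X by closed balls also covers the entire closed unit ball B_X. -/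
/-!
Let `y` be a point of the closed unit ball. Choose norming functionals `fᵢ` of norm at most one
for the vectors `y - xᵢ`. Since `X` is infinite-dimensional, the finitely many `fᵢ` have a common
nonzero kernel vector `z`, and along the line `y + t • z` each `fᵢ` shows that the distance to `xᵢ`
never drops below `‖y - xᵢ‖`. This line meets the unit sphere, and the ball covering that point
therefore also contains `y`.
-/

open Metric

theorem exists_ne_zero_forall_apply_eq_zero_of_not_finiteDimensional {𝕜 V ι : Type*} [Field 𝕜]
    [AddCommGroup V] [Module 𝕜 V] [Finite ι] (h : ¬ FiniteDimensional 𝕜 V)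
    (f : ι → V →ₗ[𝕜] 𝕜) : ∃ z : V, z ≠ 0 ∧ ∀ i, f i z = 0 := by
  by_contra! hf
  refine h (FiniteDimensional.of_injective (LinearMap.pi f) ?_)
  rw [← LinearMap.ker_eq_bot, LinearMap.ker_eq_bot']
  intro z hz
  by_contra hz0
  obtain ⟨i, hi⟩ := hf z hz0
  exact hi (congrFun hz i)

section Normed

variable {E : Type*} [NormedAddCommGroup E] [NormedSpace ℝ E]

theorem dist_le_dist_add_of_apply_eq_zero {f : StrongDual ℝ E} (hf : ‖f‖ ≤ 1) {y c w : E}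
    (hy : f (y - c) = ‖y - c‖) (hw : f w = 0) : dist y c ≤ dist (y + w) c := by
  have hyw : f (y + w - c) = ‖y - c‖ := by rw [add_sub_right_comm, map_add, hw, add_zero, hy]
  calc dist y c = f (y + w - c) := by rw [hyw, dist_eq_norm]
    _ ≤ ‖f (y + w - c)‖ := Real.le_norm_self _
    _ ≤ ‖y + w - c‖ := f.le_of_opNorm_le hf _ |>.trans_eq (one_mul _)
    _ = dist (y + w) c := (dist_eq_norm _ _).symm

theorem exists_ne_zero_forall_dist_le_dist_add_smul {ι : Type*} [Finite ι]
    (h : ¬ FiniteDimensional ℝ E) (y : E) (c : ι → E) :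
    ∃ z : E, z ≠ 0 ∧ ∀ i (t : ℝ), dist y (c i) ≤ dist (y + t • z) (c i) := by
  choose f hf hfy using fun i => exists_dual_vector'' ℝ (y - c i)
  obtain ⟨z, hz0, hz⟩ :=
    exists_ne_zero_forall_apply_eq_zero_of_not_finiteDimensional h fun i => (f i : E →ₗ[ℝ] ℝ)
  refine ⟨z, hz0, fun i t => dist_le_dist_add_of_apply_eq_zero (hf i) (hfy i) ?_⟩
  rw [map_smul, show f i z = 0 from hz i, smul_zero]

theorem exists_add_smul_mem_sphere_of_mem_closedBall {y z c : E} {R : ℝ} (hz : z ≠ 0)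
    (hy : y ∈ closedBall c R) : ∃ t : ℝ, y + t • z ∈ sphere c R := by
  have hz' : 0 < ‖z‖ := norm_pos_iff.mpr hz
  set T : ℝ := (R + dist y c) / ‖z‖
  have hR : 0 ≤ R + dist y c := by linarith [mem_closedBall.mp hy, dist_nonneg (x := y) (y := c)]
  have hT : 0 ≤ T := div_nonneg hR hz'.le
  have hTz : ‖T • z‖ = R + dist y c := by
    rw [norm_smul, Real.norm_eq_abs, abs_of_nonneg hT, div_mul_cancel₀ _ hz'.ne']
  have hfar : R ≤ dist (y + T • z) c := by
    have := dist_triangle_right (y + T • z) y c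
    rw [dist_eq_norm (y + T • z) y, add_sub_cancel_left, hTz] at this
    linarith
  have hcont : Continuous fun t : ℝ => dist (y + t • z) c := by fun_prop
  obtain ⟨t, -, ht⟩ := intermediate_value_Icc hT hcont.continuousOn
    ⟨by simpa using mem_closedBall.mp hy, hfar⟩
  exact ⟨t, ht⟩

end Normed

theorem stmt5_general {X : Type*} [NormedAddCommGroup X] [NormedSpace ℝ X]
    (hinf : ¬ FiniteDimensional ℝ X)
    (n : ℕ) (x : Fin n → X) (r : Fin n → ℝ)
    (hcov : sphere (0 : X) 1 ⊆ ⋃ i, closedBall (x i) (r i)) :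
    closedBall (0 : X) 1 ⊆ ⋃ i, closedBall (x i) (r i) := by
  intro y hy
  obtain ⟨z, hz0, hz⟩ := exists_ne_zero_forall_dist_le_dist_add_smul hinf y x
  obtain ⟨t, ht⟩ := exists_add_smul_mem_sphere_of_mem_closedBall hz0 hy
  obtain ⟨i, hi⟩ := Set.mem_iUnion.mp (hcov ht)
  exact Set.mem_iUnion.mpr ⟨i, (hz i t).trans hi⟩

theorem stmt5 {X : Type*} [NormedAddCommGroup X] [NormedSpace ℝ X] [CompleteSpace X]
    (hinf : ¬ FiniteDimensional ℝ X)
    (n : ℕ) (x : Fin n → X) (r : Fin n → ℝ) (hr : ∀ i, 0 < r i)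
    (hcov : sphere (0 : X) 1 ⊆ ⋃ i, closedBall (x i) (r i)) :
    closedBall (0 : X) 1 ⊆ ⋃ i, closedBall (x i) (r i) :=
  stmt5_general hinf n x r hcov
end

section
/- For fixed unit vectors x₁ ∈ S_X and y₁ ∈ S_Y, every point (x,y) of the unit sphere of X ⊕_p Y (1 < p < ∞) satisfies min{‖(x₁,0) - (x,y)‖_p, ‖(0,y₁) - (x,y)‖_p} ≤ (((2^{1/p}+1)^p + 1)/2)^{1/p}; hence the unit sphere of X ⊕_p Y is covered by the two closed balls of this radius centered at (x₁,0) and (0,y₁). -/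
/-!
Write `z = (x, y)` on the unit sphere, so `‖x‖ ^ p + ‖y‖ ^ p = 1`, and say `‖x‖ ^ p ≤ 1 / 2`.
By the triangle inequality `‖(x₁, 0) - z‖ ^ p ≤ (1 + ‖x‖) ^ p + ‖y‖ ^ p
= (1 + ‖x‖) ^ p - ‖x‖ ^ p + 1`. Since `s ↦ (1 + s) ^ p - s ^ p` is increasing on `[0, ∞)`
(its derivative is `p ((1 + s) ^ (p - 1) - s ^ (p - 1)) ≥ 0`), this is largest for
`‖x‖ = 2 ^ (-1 / p)`, where it equals `((2 ^ (1 / p) + 1) ^ p + 1) / 2`.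
-/

open Metric

section RealInequalities

variable {p : ℝ}

lemma monotoneOn_one_add_rpow_sub_rpow (hp : 1 ≤ p) :
    MonotoneOn (fun s : ℝ => (1 + s) ^ p - s ^ p) (Set.Ici 0) := by
  have hderiv (s : ℝ) : HasDerivAt (fun s : ℝ => (1 + s) ^ p - s ^ p)
      (p * (1 + s) ^ (p - 1) - p * s ^ (p - 1)) s := by
    have h₁ : HasDerivAt (fun s : ℝ => (1 + s) ^ p) (p * (1 + s) ^ (p - 1)) s := by
      simpa using ((hasDerivAt_id s).const_add 1).rpow_const (p := p) (Or.inr hp)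
    exact h₁.sub (Real.hasDerivAt_rpow_const (Or.inr hp))
  refine monotoneOn_of_deriv_nonneg (convex_Ici 0)
    (fun s _ => (hderiv s).continuousAt.continuousWithinAt)
    (fun s _ => (hderiv s).differentiableAt.differentiableWithinAt) fun s hs => ?_
  rw [interior_Ici, Set.mem_Ioi] at hs
  rw [(hderiv s).deriv, ← mul_sub]
  have : s ^ (p - 1) ≤ (1 + s) ^ (p - 1) := by gcongr; linarith
  nlinarith

lemma one_add_rpow_add_rpow_le (hp : 1 ≤ p) {a b : ℝ} (ha : 0 ≤ a)
    (hab : a ^ p + b ^ p = 1) (ha_half : a ^ p ≤ 1 / 2) :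
    (1 + a) ^ p + b ^ p ≤ (((2 : ℝ) ^ (1 / p) + 1) ^ p + 1) / 2 := by
  have hp₀ : 0 < p := by linarith
  have hcp : ((1 / 2 : ℝ) ^ (1 / p)) ^ p = 1 / 2 := by
    rw [← Real.rpow_mul (by norm_num), one_div_mul_cancel hp₀.ne', Real.rpow_one]
  set c : ℝ := (1 / 2 : ℝ) ^ (1 / p)
  have hc₀ : 0 ≤ c := by positivity
  have hac : a ≤ c := (Real.rpow_le_rpow_iff ha hc₀ hp₀).mp (hcp ▸ ha_half)
  have hone_add_c : 1 + c = ((2 : ℝ) ^ (1 / p) + 1) * c := by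
    have : (2 : ℝ) ^ (1 / p) * c = 1 := by
      rw [← Real.mul_rpow (by norm_num) (by norm_num)]; norm_num
    linarith
  calc (1 + a) ^ p + b ^ p = (1 + a) ^ p - a ^ p + 1 := by linarith
    _ ≤ (1 + c) ^ p - c ^ p + 1 := by
      gcongr ?_ + 1
      exact monotoneOn_one_add_rpow_sub_rpow hp ha hc₀ hac
    _ = (((2 : ℝ) ^ (1 / p) + 1) ^ p + 1) / 2 := by
      rw [hone_add_c, Real.mul_rpow (by positivity) hc₀, hcp]; ring

lemma one_add_rpow_add_rpow_le_or (hp : 1 ≤ p) {a b : ℝ} (ha : 0 ≤ a) (hb : 0 ≤ b)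
    (hab : a ^ p + b ^ p = 1) :
    (1 + a) ^ p + b ^ p ≤ (((2 : ℝ) ^ (1 / p) + 1) ^ p + 1) / 2 ∨
      a ^ p + (1 + b) ^ p ≤ (((2 : ℝ) ^ (1 / p) + 1) ^ p + 1) / 2 := by
  rcases le_total (a ^ p) (1 / 2) with h | h
  · exact Or.inl (one_add_rpow_add_rpow_le hp ha hab h)
  · rw [add_comm (a ^ p)]
    exact Or.inr (one_add_rpow_add_rpow_le hp hb (by linarith) (by linarith))

end RealInequalities

namespace WithLp

variable {X Y : Type*} [SeminormedAddCommGroup X] [SeminormedAddCommGroup Y] {p : ℝ}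

lemma prod_norm_rpow_ofReal (hp : 0 < p) (z : WithLp (ENNReal.ofReal p) (X × Y)) :
    ‖z‖ ^ p = ‖z.fst‖ ^ p + ‖z.snd‖ ^ p := by
  rw [prod_norm_eq_add (by rwa [ENNReal.toReal_ofReal hp.le]), ENNReal.toReal_ofReal hp.le,
    one_div, Real.rpow_inv_rpow (by positivity) hp.ne']

lemma norm_toLp_inl_sub_rpow_le (hp : 0 < p) (x₁ : X) (z : WithLp (ENNReal.ofReal p) (X × Y)) :
    ‖toLp _ (x₁, 0) - z‖ ^ p ≤ (‖x₁‖ + ‖z.fst‖) ^ p + ‖z.snd‖ ^ p := by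
  rw [prod_norm_rpow_ofReal hp, sub_fst, sub_snd, toLp_fst, toLp_snd, zero_sub, norm_neg]
  gcongr
  exact norm_sub_le _ _

lemma norm_toLp_inr_sub_rpow_le (hp : 0 < p) (y₁ : Y) (z : WithLp (ENNReal.ofReal p) (X × Y)) :
    ‖toLp _ (0, y₁) - z‖ ^ p ≤ ‖z.fst‖ ^ p + (‖y₁‖ + ‖z.snd‖) ^ p := by
  rw [prod_norm_rpow_ofReal hp, sub_fst, sub_snd, toLp_fst, toLp_snd, zero_sub, norm_neg]
  gcongr
  exact norm_sub_le _ _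

lemma min_norm_toLp_sub_le [Fact (1 ≤ ENNReal.ofReal p)] {x₁ : X} {y₁ : Y}
    (hx₁ : ‖x₁‖ ≤ 1) (hy₁ : ‖y₁‖ ≤ 1)
    {z : WithLp (ENNReal.ofReal p) (X × Y)} (hz : ‖z‖ = 1) :
    min ‖toLp _ (x₁, 0) - z‖ ‖toLp _ (0, y₁) - z‖ ≤
      ((((2 : ℝ) ^ (1 / p) + 1) ^ p + 1) / 2) ^ (1 / p) := by
  have hp : 1 ≤ p := ENNReal.one_le_ofReal.mp Fact.out
  have hp₀ : 0 < p := by linarith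
  have hsum : ‖z.fst‖ ^ p + ‖z.snd‖ ^ p = 1 := by
    rw [← prod_norm_rpow_ofReal hp₀, hz, Real.one_rpow]
  have hK₀ : 0 ≤ (((2 : ℝ) ^ (1 / p) + 1) ^ p + 1) / 2 := by positivity
  set K := (((2 : ℝ) ^ (1 / p) + 1) ^ p + 1) / 2
  rw [one_div p]
  rcases one_add_rpow_add_rpow_le_or hp (norm_nonneg _) (norm_nonneg _) hsum with h | h
  · refine min_le_of_left_le ((Real.le_rpow_inv_iff_of_pos (norm_nonneg _) hK₀ hp₀).mpr ?_)
    calc _ ≤ (‖x₁‖ + ‖z.fst‖) ^ p + ‖z.snd‖ ^ p := norm_toLp_inl_sub_rpow_le hp₀ x₁ z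
      _ ≤ _ := by grw [hx₁]; exact h
  · refine min_le_of_right_le ((Real.le_rpow_inv_iff_of_pos (norm_nonneg _) hK₀ hp₀).mpr ?_)
    calc _ ≤ ‖z.fst‖ ^ p + (‖y₁‖ + ‖z.snd‖) ^ p := norm_toLp_inr_sub_rpow_le hp₀ y₁ z
      _ ≤ _ := by grw [hy₁]; exact h

end WithLp

theorem stmt8_general {X Y : Type*} [NormedAddCommGroup X] [NormedAddCommGroup Y]
    (p : ℝ) [Fact (1 ≤ ENNReal.ofReal p)]
    (x₁ : X) (hx₁ : ‖x₁‖ = 1) (y₁ : Y) (hy₁ : ‖y₁‖ = 1) :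
    (∀ z : WithLp (ENNReal.ofReal p) (X × Y), ‖z‖ = 1 →
      min ‖(WithLp.equiv (ENNReal.ofReal p) (X × Y)).symm (x₁, 0) - z‖
          ‖(WithLp.equiv (ENNReal.ofReal p) (X × Y)).symm (0, y₁) - z‖ ≤
        ((((2 : ℝ) ^ (1 / p) + 1) ^ p + 1) / 2) ^ (1 / p)) ∧
    sphere (0 : WithLp (ENNReal.ofReal p) (X × Y)) 1 ⊆
      closedBall ((WithLp.equiv (ENNReal.ofReal p) (X × Y)).symm (x₁, 0))
          (((((2 : ℝ) ^ (1 / p) + 1) ^ p + 1) / 2) ^ (1 / p)) ∪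
      closedBall ((WithLp.equiv (ENNReal.ofReal p) (X × Y)).symm (0, y₁))
          (((((2 : ℝ) ^ (1 / p) + 1) ^ p + 1) / 2) ^ (1 / p)) := by
  have hcover := fun (z : WithLp (ENNReal.ofReal p) (X × Y)) (hz : ‖z‖ = 1) =>
    WithLp.min_norm_toLp_sub_le hx₁.le hy₁.le hz
  refine ⟨hcover, fun z hz => ?_⟩
  rw [mem_sphere_zero_iff_norm] at hz
  simp only [Set.mem_union, mem_closedBall', dist_eq_norm]
  exact min_le_iff.mp (hcover z hz)

theorem stmt8 {X Y : Type*} [NormedAddCommGroup X] [NormedSpace ℝ X]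
    [NormedAddCommGroup Y] [NormedSpace ℝ Y]
    (p : ℝ) (hp : 1 < p) [Fact (1 ≤ ENNReal.ofReal p)]
    (x₁ : X) (hx₁ : ‖x₁‖ = 1) (y₁ : Y) (hy₁ : ‖y₁‖ = 1) :
    (∀ z : WithLp (ENNReal.ofReal p) (X × Y), ‖z‖ = 1 →
      min ‖(WithLp.equiv (ENNReal.ofReal p) (X × Y)).symm (x₁, 0) - z‖
          ‖(WithLp.equiv (ENNReal.ofReal p) (X × Y)).symm (0, y₁) - z‖ ≤
        ((((2 : ℝ) ^ (1 / p) + 1) ^ p + 1) / 2) ^ (1 / p)) ∧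
    sphere (0 : WithLp (ENNReal.ofReal p) (X × Y)) 1 ⊆
      closedBall ((WithLp.equiv (ENNReal.ofReal p) (X × Y)).symm (x₁, 0))
          (((((2 : ℝ) ^ (1 / p) + 1) ^ p + 1) / 2) ^ (1 / p)) ∪
      closedBall ((WithLp.equiv (ENNReal.ofReal p) (X × Y)).symm (0, y₁))
          (((((2 : ℝ) ^ (1 / p) + 1) ^ p + 1) / 2) ^ (1 / p)) :=
  stmt8_general p x₁ hx₁ y₁ hy₁
end

section
/- If X and Y are nonzero Banach spaces and 1 < p < ∞, then the norm on X ⊕_p Y is never octahedral. -/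
open Metric

/-!
Take unit vectors `u = (x, 0)` and `v = (0, y)` of `X ⊕_p Y`. For a unit vector `f = (a, b)`,
the triangle inequality and convexity of `t ↦ t ^ p` give
`‖u - f‖ ^ p + ‖v - f‖ ^ p
  ≤ 2 ^ (p - 1) (1 + ‖a‖ ^ p) + ‖b‖ ^ p + ‖a‖ ^ p + 2 ^ (p - 1) (1 + ‖b‖ ^ p)
  = 3 * 2 ^ (p - 1) + 1`,
which is smaller than `2 * 2 ^ p` when `p > 1`. So `u` and `v` cannot both be at distance close
to `2` from `f`, while octahedrality provides such an `f`.
-/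

open Filter Topology WithLp NNReal

lemma Real.add_rpow_le_two_rpow_mul_add_rpow {p a b : ℝ} (ha : 0 ≤ a) (hb : 0 ≤ b)
    (hp : 1 ≤ p) : (a + b) ^ p ≤ 2 ^ (p - 1) * (a ^ p + b ^ p) := by
  lift a to ℝ≥0 using ha
  lift b to ℝ≥0 using hb
  exact_mod_cast NNReal.rpow_add_le_mul_rpow_add_rpow a b hp

lemma norm_sub_rpow_le {E : Type*} [SeminormedAddCommGroup E] {p : ℝ} (hp : 1 ≤ p) (a b : E) :
    ‖a - b‖ ^ p ≤ 2 ^ (p - 1) * (‖a‖ ^ p + ‖b‖ ^ p) :=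
  (Real.rpow_le_rpow (norm_nonneg _) (norm_sub_le a b) (by linarith)).trans
    (Real.add_rpow_le_two_rpow_mul_add_rpow (norm_nonneg a) (norm_nonneg b) hp)

theorem Octahedral.exists_norm_sub_ge {E : Type*} [NormedAddCommGroup E] [NormedSpace ℝ E]
    (h : Octahedral E) {s : Set E} (hs : s.Finite) (hs₁ : ∀ x ∈ s, ‖x‖ = 1) {ε : ℝ}
    (hε : 0 < ε) : ∃ y : E, ‖y‖ = 1 ∧ ∀ x ∈ s, 2 - ε ≤ ‖x - y‖ := by
  obtain ⟨y, hy, hfar⟩ := h (Submodule.span ℝ s) (FiniteDimensional.span_of_finite ℝ hs)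
    (ε / 2) (by positivity)
  refine ⟨y, hy, fun x hx => ?_⟩
  have := hfar x (Submodule.subset_span hx)
  rw [hs₁ x hx, hy] at this
  linarith

theorem Octahedral.two_mul_two_rpow_le_of_norm_sub_rpow_add_le {E : Type*}
    [NormedAddCommGroup E] [NormedSpace ℝ E] (h : Octahedral E) {u v : E} (hu : ‖u‖ = 1)
    (hv : ‖v‖ = 1) {p C : ℝ} (hp : 0 ≤ p)
    (hC : ∀ f : E, ‖f‖ = 1 → ‖u - f‖ ^ p + ‖v - f‖ ^ p ≤ C) : 2 * 2 ^ p ≤ C := by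
  have hfar : ∀ ε ∈ Set.Ioo (0 : ℝ) 2, 2 * (2 - ε) ^ p ≤ C := by
    rintro ε ⟨hε, hε₂⟩
    obtain ⟨f, hf, hfar⟩ := h.exists_norm_sub_ge (s := {u, v}) (by simp) (by simp [hu, hv]) hε
    calc 2 * (2 - ε) ^ p = (2 - ε) ^ p + (2 - ε) ^ p := two_mul _
      _ ≤ ‖u - f‖ ^ p + ‖v - f‖ ^ p := by
        gcongr
        exacts [hfar u (by simp), hfar v (by simp)]
      _ ≤ C := hC f hf
  have hlim : Tendsto (fun ε : ℝ => 2 * (2 - ε) ^ p) (𝓝[>] 0) (𝓝 (2 * 2 ^ p)) := by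
    apply tendsto_nhdsWithin_of_tendsto_nhds
    have : ContinuousAt (fun ε : ℝ => 2 * (2 - ε) ^ p) 0 := by fun_prop (disch := norm_num)
    simpa using this.tendsto
  exact le_of_tendsto hlim (by filter_upwards [Ioo_mem_nhdsGT two_pos] using hfar)

lemma one_le_of_fact_one_le_ofReal {p : ℝ} [Fact (1 ≤ ENNReal.ofReal p)] : 1 ≤ p :=
  ENNReal.one_le_ofReal.mp Fact.out

namespace WithLp

variable {α β : Type*} [SeminormedAddCommGroup α] [SeminormedAddCommGroup β] {p : ℝ}
  [Fact (1 ≤ ENNReal.ofReal p)]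

lemma prod_norm_rpow_eq_add_of_ofReal (f : WithLp (ENNReal.ofReal p) (α × β)) :
    ‖f‖ ^ p = ‖f.fst‖ ^ p + ‖f.snd‖ ^ p := by
  have hp : 0 < p := zero_lt_one.trans_le one_le_of_fact_one_le_ofReal
  have hp' : (ENNReal.ofReal p).toReal = p := ENNReal.toReal_ofReal hp.le
  rw [prod_norm_eq_add (hp'.symm ▸ hp), hp', one_div, Real.rpow_inv_rpow (by positivity) hp.ne']

lemma norm_toLp_inl_sub_rpow_le_s9 (x : α) (f : WithLp (ENNReal.ofReal p) (α × β)) :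
    ‖toLp _ (x, 0) - f‖ ^ p ≤ 2 ^ (p - 1) * (‖x‖ ^ p + ‖f.fst‖ ^ p) + ‖f.snd‖ ^ p := by
  rw [prod_norm_rpow_eq_add_of_ofReal]
  simpa using norm_sub_rpow_le one_le_of_fact_one_le_ofReal x f.fst

lemma norm_toLp_inr_sub_rpow_le_s9 (y : β) (f : WithLp (ENNReal.ofReal p) (α × β)) :
    ‖toLp _ (0, y) - f‖ ^ p ≤ ‖f.fst‖ ^ p + 2 ^ (p - 1) * (‖y‖ ^ p + ‖f.snd‖ ^ p) := by
  rw [prod_norm_rpow_eq_add_of_ofReal]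
  simpa using norm_sub_rpow_le one_le_of_fact_one_le_ofReal y f.snd

lemma norm_toLp_inl_sub_rpow_add_norm_toLp_inr_sub_rpow_le {x : α} {y : β} (hx : ‖x‖ = 1)
    (hy : ‖y‖ = 1) {f : WithLp (ENNReal.ofReal p) (α × β)} (hf : ‖f‖ = 1) :
    ‖toLp _ (x, 0) - f‖ ^ p + ‖toLp _ (0, y) - f‖ ^ p ≤ 3 * 2 ^ (p - 1) + 1 := by
  have hf' : ‖f.fst‖ ^ p + ‖f.snd‖ ^ p = 1 := by
    rw [← prod_norm_rpow_eq_add_of_ofReal, hf, Real.one_rpow]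
  have h₁ := norm_toLp_inl_sub_rpow_le_s9 x f
  have h₂ := norm_toLp_inr_sub_rpow_le_s9 y f
  rw [hx, Real.one_rpow] at h₁
  rw [hy, Real.one_rpow] at h₂
  linear_combination h₁ + h₂ + (2 ^ (p - 1) + 1) * hf'

end WithLp

theorem stmt9_general {X Y : Type*} [NormedAddCommGroup X] [NormedSpace ℝ X]
    [Nontrivial X] [NormedAddCommGroup Y] [NormedSpace ℝ Y] [Nontrivial Y]
    (p : ℝ) (hp : 1 < p) [Fact (1 ≤ ENNReal.ofReal p)] :
    ¬ Octahedral (WithLp (ENNReal.ofReal p) (X × Y)) := by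
  intro hoct
  obtain ⟨x, hx⟩ := exists_norm_eq X zero_le_one
  obtain ⟨y, hy⟩ := exists_norm_eq Y zero_le_one
  have hle : 2 * 2 ^ p ≤ 3 * (2 : ℝ) ^ (p - 1) + 1 :=
    hoct.two_mul_two_rpow_le_of_norm_sub_rpow_add_le (u := toLp _ (x, 0)) (v := toLp _ (0, y))
      (by simp [hx]) (by simp [hy]) (by linarith) fun _ hf =>
        WithLp.norm_toLp_inl_sub_rpow_add_norm_toLp_inr_sub_rpow_le hx hy hf
  have h2p : (2 : ℝ) ^ p = 2 * 2 ^ (p - 1) := by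
    rw [Real.rpow_sub_one two_ne_zero]; ring
  have h2p₁ : 1 < (2 : ℝ) ^ (p - 1) := Real.one_lt_rpow one_lt_two (by linarith)
  linarith

theorem stmt9 {X Y : Type*} [NormedAddCommGroup X] [NormedSpace ℝ X] [CompleteSpace X]
    [Nontrivial X] [NormedAddCommGroup Y] [NormedSpace ℝ Y] [CompleteSpace Y] [Nontrivial Y]
    (p : ℝ) (hp : 1 < p) [Fact (1 ≤ ENNReal.ofReal p)] :
    ¬ Octahedral (WithLp (ENNReal.ofReal p) (X × Y)) :=
  stmt9_general p hp
end

section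
/- For 1 < p < ∞, ((2^{1/p} + 1)^p + 1)/2 < 2^p. -/
/-! Strict convexity of `x ↦ x ^ p` on `[0, ∞)` gives `(t + 1) ^ p < 2 ^ (p - 1) (t ^ p + 1)` for
`t ≠ 1`. At `t = 2 ^ (1 / p)`, where `t ^ p = 2`, the right-hand side is `3 · 2 ^ (p - 1)`, which is
at most `2 ^ (p + 1) - 1` because `2 ^ (p - 1) ≥ 1`. -/

namespace Real

theorem rpow_add_lt_mul_rpow_add_rpow {p a b : ℝ} (hp : 1 < p) (ha : 0 ≤ a) (hb : 0 ≤ b)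
    (hab : a ≠ b) : (a + b) ^ p < 2 ^ (p - 1) * (a ^ p + b ^ p) := by
  have hmid : ((a + b) / 2) ^ p < (a ^ p + b ^ p) / 2 := by
    have := (strictConvexOn_rpow hp).2 ha hb hab (by norm_num : (0 : ℝ) < 1 / 2)
      (by norm_num : (0 : ℝ) < 1 / 2) (by norm_num)
    simpa only [smul_eq_mul, one_div_mul_eq_div, add_div] using this
  have hsplit : (a + b) ^ p = 2 ^ p * ((a + b) / 2) ^ p := by
    rw [← mul_rpow (by norm_num) (by positivity), mul_div_cancel₀ _ two_ne_zero]
  calc (a + b) ^ p = 2 ^ p * ((a + b) / 2) ^ p := hsplit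
    _ < 2 ^ p * ((a ^ p + b ^ p) / 2) := by gcongr
    _ = 2 ^ (p - 1) * (a ^ p + b ^ p) := by rw [rpow_sub_one two_ne_zero]; ring

end Real

theorem stmt10 (p : ℝ) (hp : 1 < p) :
    (((2 : ℝ) ^ (1 / p) + 1) ^ p + 1) / 2 < 2 ^ p := by
  have hp0 : 0 < p := by linarith
  have hroot : ((2 : ℝ) ^ (1 / p)) ^ p = 2 := by
    rw [← Real.rpow_mul (by norm_num), one_div_mul_cancel hp0.ne', Real.rpow_one]
  have hroot_ne : (2 : ℝ) ^ (1 / p) ≠ 1 := by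
    intro h
    rw [h, Real.one_rpow] at hroot
    norm_num at hroot
  have hconv := Real.rpow_add_lt_mul_rpow_add_rpow hp (by positivity) zero_le_one hroot_ne
  rw [hroot, Real.one_rpow] at hconv
  have htwo : (2 : ℝ) ^ (p - 1) = 2 ^ p / 2 := Real.rpow_sub_one two_ne_zero p
  have hone : (1 : ℝ) ≤ 2 ^ (p - 1) := Real.one_le_rpow (by norm_num) (by linarith)
  linarith
end

section
/- If the norm on a Banach space X is locally octahedral and S_X ⊆ B(x,r) ∪ B(-x,r) for some x ∈ X and r > 0, then S_X ⊆ B(x,r) (equivalently r ≥ ‖x‖ + 1). -/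
open Metric

def LocallyOctahedral (X : Type*) [NormedAddCommGroup X] [NormedSpace ℝ X] : Prop :=
  ∀ x : X, ∀ ε : ℝ, 0 < ε →
    ∃ y : X, ‖y‖ = 1 ∧ ∀ s : ℝ, (1 - ε) * (|s| * ‖x‖ + ‖y‖) ≤ ‖s • x - y‖

/-!
Local octahedrality applied to `x` gives, for every `ε > 0`, a unit vector `y` whose distance
to both `x` and `-x` (the cases `s = ±1`) is at least `(1 - ε)(‖x‖ + 1)`. Since `y` lies in one
of the two balls, `(1 - ε)(‖x‖ + 1) ≤ r`; letting `ε → 0` gives `‖x‖ + 1 ≤ r`, and then the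
triangle inequality puts the whole unit sphere in `B(x, r)`.
-/

open Filter Topology

lemma le_of_forall_pos_one_sub_mul_le {a b : ℝ} (h : ∀ ε > 0, (1 - ε) * a ≤ b) : a ≤ b := by
  have hlim : Tendsto (fun ε : ℝ => (1 - ε) * a) (𝓝[>] 0) (𝓝 a) := by
    have : Continuous fun ε : ℝ => (1 - ε) * a := by fun_prop
    simpa using (this.tendsto 0).mono_left nhdsWithin_le_nhds
  exact le_of_tendsto hlim (eventually_nhdsWithin_of_forall h)

namespace LocallyOctahedral

variable {X : Type*} [NormedAddCommGroup X] [NormedSpace ℝ X]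

lemma exists_mem_sphere_far_from_and_neg (h : LocallyOctahedral X) (x : X) {ε : ℝ} (hε : 0 < ε) :
    ∃ y ∈ sphere (0 : X) 1,
      (1 - ε) * (‖x‖ + 1) ≤ dist y x ∧ (1 - ε) * (‖x‖ + 1) ≤ dist y (-x) := by
  obtain ⟨y, hy, hfar⟩ := h x ε hε
  refine ⟨y, mem_sphere_zero_iff_norm.2 hy, ?_, ?_⟩
  · simpa [hy, dist_comm y, dist_eq_norm] using hfar 1
  · simpa [hy, dist_eq_norm, ← norm_neg (-x - y), add_comm] using hfar (-1)

lemma norm_add_one_le_of_sphere_subset (h : LocallyOctahedral X) {x : X} {r : ℝ}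
    (hcov : sphere (0 : X) 1 ⊆ closedBall x r ∪ closedBall (-x) r) : ‖x‖ + 1 ≤ r := by
  refine le_of_forall_pos_one_sub_mul_le fun ε hε => ?_
  obtain ⟨y, hy, hx, hnx⟩ := h.exists_mem_sphere_far_from_and_neg x hε
  rcases hcov hy with hyx | hyx
  · exact hx.trans (mem_closedBall.1 hyx)
  · exact hnx.trans (mem_closedBall.1 hyx)

end LocallyOctahedral

theorem stmt12_general {X : Type*} [NormedAddCommGroup X] [NormedSpace ℝ X]
    (hloh : LocallyOctahedral X) (x : X) (r : ℝ)
    (hcov : sphere (0 : X) 1 ⊆ closedBall x r ∪ closedBall (-x) r) :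
    sphere (0 : X) 1 ⊆ closedBall x r ∧ ‖x‖ + 1 ≤ r := by
  have hr : ‖x‖ + 1 ≤ r := hloh.norm_add_one_le_of_sphere_subset hcov
  refine ⟨sphere_subset_closedBall.trans (closedBall_subset_closedBall' ?_), hr⟩
  rwa [dist_zero_left, add_comm]

theorem stmt12 {X : Type*} [NormedAddCommGroup X] [NormedSpace ℝ X] [CompleteSpace X]
    (hloh : LocallyOctahedral X) (x : X) (r : ℝ) (hr : 0 < r)
    (hcov : sphere (0 : X) 1 ⊆ closedBall x r ∪ closedBall (-x) r) :
    sphere (0 : X) 1 ⊆ closedBall x r ∧ ‖x‖ + 1 ≤ r :=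
  stmt12_general hloh x r hcov
end

section
/- Suppose X is a Banach space such that whenever S_X ⊆ B(x,r) ∪ B(-x,r) for some x ∈ S_X and r > 0, one has S_X ⊆ B(x,r). Then the norm on X is locally octahedral. -/
/-! If no unit vector `y` is "octahedral" for the unit vector `u` up to `ε`, i.e. every `y ∈ S_X`
admits a `t` with `‖t • u - y‖ < (1 - ε) (|t| + 1)`, then every `y ∈ S_X` lies within `2 - ε` of
`u` or of `-u`: for `|t| ≤ 1` this is the triangle inequality through `t • u`, and for `|t| > 1`
the same argument applies after dividing by `|t|`, with the roles of `u` and `y` exchanged.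
The hypothesis then puts `-u` within `2 - ε` of `u`, which is absurd. -/

open Metric

section

variable {X : Type*} [NormedAddCommGroup X] [NormedSpace ℝ X]

lemma norm_sub_lt_of_norm_smul_sub_lt_of_le_one {u y : X} {t ε : ℝ} (hu : ‖u‖ = 1)
    (ht₀ : 0 ≤ t) (ht₁ : t ≤ 1) (hε : 0 ≤ ε) (h : ‖t • u - y‖ < (1 - ε) * (t + 1)) :
    ‖u - y‖ < 2 - ε := by
  have hdist : ‖u - t • u‖ = 1 - t := by
    rw [show u - t • u = (1 - t) • u by rw [sub_smul, one_smul], norm_smul, hu, mul_one,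
      Real.norm_of_nonneg (by linarith)]
  calc ‖u - y‖ ≤ ‖u - t • u‖ + ‖t • u - y‖ := norm_sub_le_norm_sub_add_norm_sub _ _ _
    _ < 2 - ε := by nlinarith

lemma norm_sub_lt_of_norm_smul_sub_lt {u y : X} {t ε : ℝ} (hu : ‖u‖ = 1) (hy : ‖y‖ = 1)
    (ht : 0 < t) (hε : 0 ≤ ε) (h : ‖t • u - y‖ < (1 - ε) * (t + 1)) :
    ‖u - y‖ < 2 - ε := by
  rcases le_total t 1 with ht₁ | ht₁
  · exact norm_sub_lt_of_norm_smul_sub_lt_of_le_one hu ht.le ht₁ hε h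
  rw [norm_sub_rev]
  refine norm_sub_lt_of_norm_smul_sub_lt_of_le_one hy (inv_nonneg.2 ht.le)
    (inv_le_one_of_one_le₀ ht₁) hε ?_
  calc ‖t⁻¹ • y - u‖ = t⁻¹ * ‖t • u - y‖ := by
        rw [show t⁻¹ • y - u = t⁻¹ • (y - t • u) by rw [smul_sub, inv_smul_smul₀ ht.ne'],
          norm_smul, Real.norm_of_nonneg (inv_nonneg.2 ht.le), norm_sub_rev]
    _ < t⁻¹ * ((1 - ε) * (t + 1)) := mul_lt_mul_of_pos_left h (inv_pos.2 ht)
    _ = (1 - ε) * (t⁻¹ + 1) := by field_simp; ring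

lemma dist_lt_or_dist_neg_lt_of_norm_smul_sub_lt {u y : X} {t ε : ℝ} (hu : ‖u‖ = 1)
    (hy : ‖y‖ = 1) (hε : 0 ≤ ε) (h : ‖t • u - y‖ < (1 - ε) * (|t| + 1)) :
    dist y u < 2 - ε ∨ dist y (-u) < 2 - ε := by
  rw [dist_eq_norm, dist_eq_norm, norm_sub_rev, norm_sub_rev y]
  rcases lt_trichotomy t 0 with ht | rfl | ht
  · rw [abs_of_neg ht, ← neg_smul_neg] at h
    exact .inr (norm_sub_lt_of_norm_smul_sub_lt (by rwa [norm_neg]) hy (neg_pos.2 ht) hε h)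
  · simp only [zero_smul, zero_sub, norm_neg, hy, abs_zero] at h
    linarith
  · rw [abs_of_pos ht] at h
    exact .inl (norm_sub_lt_of_norm_smul_sub_lt hu hy ht hε h)

lemma LocallyOctahedral.of_forall_norm_eq_one [Nontrivial X]
    (H : ∀ u : X, ‖u‖ = 1 → ∀ ε : ℝ, 0 < ε → ε < 1 →
      ∃ y : X, ‖y‖ = 1 ∧ ∀ t : ℝ, (1 - ε) * (|t| + 1) ≤ ‖t • u - y‖) :
    LocallyOctahedral X := by
  intro x ε hε
  obtain ⟨z, hz⟩ := exists_norm_eq X zero_le_one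
  rcases eq_or_ne x 0 with rfl | hx
  · refine ⟨z, hz, fun s => ?_⟩
    simp only [smul_zero, zero_sub, norm_neg, norm_zero, mul_zero, zero_add, hz]
    linarith
  rcases le_or_gt 1 ε with hε₁ | hε₁
  · exact ⟨z, hz, fun s =>
      (mul_nonpos_of_nonpos_of_nonneg (by linarith) (by positivity)).trans (norm_nonneg _)⟩
  obtain ⟨y, hy, hyu⟩ := H _ (norm_smul_inv_norm (𝕜 := ℝ) hx) ε hε hε₁
  refine ⟨y, hy, fun s => ?_⟩
  simpa only [mul_smul, RCLike.ofReal_real_eq_id, id_eq, smul_inv_smul₀ (norm_ne_zero_iff.2 hx),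
    abs_mul, abs_norm, hy] using hyu (s * ‖x‖)

end

theorem stmt13_general {X : Type*} [NormedAddCommGroup X] [NormedSpace ℝ X]
    [Nontrivial X]
    (h : ∀ x : X, ‖x‖ = 1 → ∀ r : ℝ, 0 < r →
      sphere (0 : X) 1 ⊆ closedBall x r ∪ closedBall (-x) r →
      sphere (0 : X) 1 ⊆ closedBall x r) :
    LocallyOctahedral X := by
  refine LocallyOctahedral.of_forall_norm_eq_one fun u hu ε hε hε₁ => ?_
  by_contra! hbad
  have hcover : sphere (0 : X) 1 ⊆ closedBall u (2 - ε) ∪ closedBall (-u) (2 - ε) := by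
    intro y hy
    rw [mem_sphere_zero_iff_norm] at hy
    obtain ⟨t, ht⟩ := hbad y hy
    exact (dist_lt_or_dist_neg_lt_of_norm_smul_sub_lt hu hy hε.le ht).imp le_of_lt le_of_lt
  have hneg : dist (-u) u ≤ 2 - ε :=
    h u hu _ (by linarith) hcover (by rwa [mem_sphere_zero_iff_norm, norm_neg])
  rw [dist_eq_norm, ← neg_add', norm_neg, ← two_smul ℝ, norm_smul, hu] at hneg
  norm_num at hneg
  linarith

theorem stmt13 {X : Type*} [NormedAddCommGroup X] [NormedSpace ℝ X] [CompleteSpace X]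
    [Nontrivial X]
    (h : ∀ x : X, ‖x‖ = 1 → ∀ r : ℝ, 0 < r →
      sphere (0 : X) 1 ⊆ closedBall x r ∪ closedBall (-x) r →
      sphere (0 : X) 1 ⊆ closedBall x r) :
    LocallyOctahedral X :=
  stmt13_general h
end

section
/- The norm on a Banach space X is locally octahedral if and only if g'(X) = 2, where g'(X) = inf{ε > 0 : S_X ⊆ B(x,ε) ∪ B(-x,ε) for some x ∈ S_X}. -/
open Metric

noncomputable def gprime (X : Type*) [NormedAddCommGroup X] : ℝ :=
  sInf {ε : ℝ | 0 < ε ∧ ∃ x : X, ‖x‖ = 1 ∧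
    sphere (0 : X) 1 ⊆ closedBall x ε ∪ closedBall (-x) ε}

/-!
If the norm is locally octahedral, then for every unit vector `x` some unit vector `y` is
almost at distance `2` from both `x` and `-x`, so no pair of balls of radius `< 2` centred at
`±x` covers the sphere, and `g'(X) = 2`.

Conversely, if local octahedrality fails at `x` and `ε`, then with `u = x / ‖x‖` every unit
vector `y` satisfies `‖t • u - y‖ < (1 - ε) (|t| + 1)` for some `t`. For `t ≥ 0` the triangle
inequality (through `u` if `t ≤ 1`, through `t • y` if `t ≥ 1`) gives `‖y - u‖ < 2 - ε`, and
for `t < 0` likewise `‖y + u‖ < 2 - ε`. So the sphere is covered by balls of radius `< 2`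
around `±u`, and `g'(X) < 2`.
-/

section Seminormed

variable {E : Type*} [SeminormedAddCommGroup E] [NormedSpace ℝ E]

lemma norm_smul_sub_self {u : E} (hu : ‖u‖ = 1) (t : ℝ) : ‖t • u - u‖ = |t - 1| := by
  have : t • u - u = (t - 1) • u := by rw [sub_smul, one_smul]
  rw [this, norm_smul, hu, mul_one, Real.norm_eq_abs]

lemma add_one_sub_norm_smul_sub_le {u y : E} {t : ℝ} (hu : ‖u‖ = 1) (hy : ‖y‖ = 1)
    (ht : 0 ≤ t) : t + 1 - ‖t • u - y‖ ≤ max 1 t * (2 - ‖y - u‖) := by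
  rcases le_total t 1 with h | h
  · have htri : ‖y - u‖ ≤ ‖y - t • u‖ + ‖t • u - u‖ := norm_sub_le_norm_sub_add_norm_sub _ _ _
    rw [norm_smul_sub_self hu, abs_of_nonpos (by linarith), norm_sub_rev y (t • u)] at htri
    rw [max_eq_left h]
    linarith
  · have htri : ‖t • y - t • u‖ ≤ ‖t • y - y‖ + ‖y - t • u‖ :=
      norm_sub_le_norm_sub_add_norm_sub _ _ _
    rw [← smul_sub, norm_smul, Real.norm_of_nonneg ht, norm_smul_sub_self hy,
      abs_of_nonneg (by linarith), norm_sub_rev y (t • u)] at htri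
    rw [max_eq_right h]
    linarith

lemma norm_sub_lt_two_sub_of_nonneg {u y : E} {t ε : ℝ} (hu : ‖u‖ = 1) (hy : ‖y‖ = 1)
    (ht : 0 ≤ t) (hε : 0 ≤ ε) (h : ‖t • u - y‖ < (1 - ε) * (t + 1)) : ‖y - u‖ < 2 - ε := by
  have hmax : 0 < max 1 t := lt_max_of_lt_left one_pos
  have hmax_le : max 1 t ≤ t + 1 := max_le (by linarith) (by linarith)
  have : max 1 t * ε < max 1 t * (2 - ‖y - u‖) := calc
    max 1 t * ε ≤ (t + 1) * ε := mul_le_mul_of_nonneg_right hmax_le hε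
    _ < t + 1 - ‖t • u - y‖ := by linarith
    _ ≤ max 1 t * (2 - ‖y - u‖) := add_one_sub_norm_smul_sub_le hu hy ht
  linarith [lt_of_mul_lt_mul_left this hmax.le]

lemma norm_sub_lt_two_sub_or_norm_add_lt_two_sub {u y : E} {s ε : ℝ} (hu : ‖u‖ = 1)
    (hy : ‖y‖ = 1) (hε : 0 ≤ ε) (h : ‖s • u - y‖ < (1 - ε) * (|s| + 1)) :
    ‖y - u‖ < 2 - ε ∨ ‖y + u‖ < 2 - ε := by
  rcases le_or_gt 0 s with hs | hs
  · rw [abs_of_nonneg hs] at h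
    exact Or.inl (norm_sub_lt_two_sub_of_nonneg hu hy hs hε h)
  · rw [abs_of_neg hs, ← neg_smul_neg] at h
    rw [← sub_neg_eq_add]
    exact Or.inr (norm_sub_lt_two_sub_of_nonneg (by rwa [norm_neg]) hy (by linarith) hε h)

end Seminormed

section Normed

variable {X : Type*} [NormedAddCommGroup X]

lemma gprime_le {x : X} {ε : ℝ} (hε : 0 < ε) (hx : ‖x‖ = 1)
    (hcov : sphere (0 : X) 1 ⊆ closedBall x ε ∪ closedBall (-x) ε) : gprime X ≤ ε :=
  csInf_le ⟨0, fun _ hε' ↦ hε'.1.le⟩ ⟨hε, x, hx, hcov⟩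

lemma exists_norm_eq_one_of_gprime_ne_zero (h : gprime X ≠ 0) : ∃ x : X, ‖x‖ = 1 := by
  by_contra! hne
  refine h ?_
  rw [gprime]
  convert Real.sInf_empty
  exact Set.eq_empty_of_forall_notMem fun ε ⟨_, x, hx, _⟩ ↦ hne x hx

variable [NormedSpace ℝ X]

lemma LocallyOctahedral.exists_two_sub_le_norm (h : LocallyOctahedral X) {x : X}
    (hx : ‖x‖ = 1) {δ : ℝ} (hδ : 0 < δ) :
    ∃ y : X, ‖y‖ = 1 ∧ 2 - δ ≤ ‖y - x‖ ∧ 2 - δ ≤ ‖y + x‖ := by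
  obtain ⟨y, hy, hs⟩ := h x (δ / 2) (by positivity)
  have h₁ := hs 1
  have h₂ := hs (-1)
  rw [abs_one, one_smul, one_mul, hx, hy, norm_sub_rev] at h₁
  rw [abs_neg, abs_one, one_mul, hx, hy, neg_one_smul, ← norm_neg, neg_sub, sub_neg_eq_add] at h₂
  exact ⟨y, hy, by linarith, by linarith⟩

lemma LocallyOctahedral.two_le_of_sphere_subset (h : LocallyOctahedral X) {x : X} {ε : ℝ}
    (hx : ‖x‖ = 1) (hcov : sphere (0 : X) 1 ⊆ closedBall x ε ∪ closedBall (-x) ε) : 2 ≤ ε := by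
  refine le_of_forall_pos_le_add fun δ hδ ↦ ?_
  obtain ⟨y, hy, hyx, hyx'⟩ := h.exists_two_sub_le_norm hx hδ
  rcases hcov (mem_sphere_zero_iff_norm.2 hy) with hb | hb
  · rw [mem_closedBall, dist_eq_norm] at hb
    linarith
  · rw [mem_closedBall, dist_eq_norm, sub_neg_eq_add] at hb
    linarith

lemma LocallyOctahedral.gprime_eq_two (h : LocallyOctahedral X) : gprime X = 2 := by
  obtain ⟨x, hx, -⟩ := h 0 1 one_pos
  have hcov : sphere (0 : X) 1 ⊆ closedBall x 2 ∪ closedBall (-x) 2 := fun y hy ↦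
    Or.inl (closedBall_subset_closedBall' (by rw [dist_zero_left, hx]; norm_num)
      (sphere_subset_closedBall hy))
  refine le_antisymm (gprime_le two_pos hx hcov) (le_csInf ⟨2, two_pos, x, hx, hcov⟩ ?_)
  rintro ε ⟨-, x, hx, hcov⟩
  exact h.two_le_of_sphere_subset hx hcov

lemma gprime_lt_two_of_forall_exists_norm_smul_sub_lt {x : X} {ε : ℝ} (hx : x ≠ 0)
    (hε : 0 < ε) (hno : ∀ y : X, ‖y‖ = 1 → ∃ s : ℝ, ‖s • x - y‖ < (1 - ε) * (|s| * ‖x‖ + ‖y‖)) :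
    gprime X < 2 := by
  set u := ‖x‖⁻¹ • x
  have hu : ‖u‖ = 1 := norm_smul_inv_norm hx
  have hcov : sphere (0 : X) 1 ⊆ closedBall u (2 - min ε 1) ∪ closedBall (-u) (2 - min ε 1) := by
    intro y hy
    rw [mem_sphere_zero_iff_norm] at hy
    obtain ⟨s, hs⟩ := hno y hy
    have hsu : (s * ‖x‖) • u = s • x := by
      rw [smul_smul, mul_assoc, mul_inv_cancel₀ (norm_ne_zero_iff.2 hx), mul_one]
    rw [← hsu, hy, ← abs_norm x, ← abs_mul, abs_norm] at hs
    rw [Set.mem_union, mem_closedBall, mem_closedBall, dist_eq_norm, dist_eq_norm, sub_neg_eq_add]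
    have hmin := min_le_left ε 1
    rcases norm_sub_lt_two_sub_or_norm_add_lt_two_sub hu hy hε.le hs with h | h
    · exact Or.inl (by linarith)
    · exact Or.inr (by linarith)
  calc gprime X ≤ 2 - min ε 1 := gprime_le (by linarith [min_le_right ε 1]) hu hcov
    _ < 2 := by linarith [lt_min hε one_pos]

lemma locallyOctahedral_of_gprime_eq_two (h : gprime X = 2) : LocallyOctahedral X := by
  intro x ε hε
  by_contra! hno
  rcases eq_or_ne x 0 with rfl | hx
  · obtain ⟨y, hy⟩ := exists_norm_eq_one_of_gprime_ne_zero (X := X) (by rw [h]; norm_num)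
    obtain ⟨s, hs⟩ := hno y hy
    rw [smul_zero, zero_sub, norm_neg, norm_zero, mul_zero, zero_add, hy] at hs
    linarith
  · exact (gprime_lt_two_of_forall_exists_norm_smul_sub_lt hx hε hno).ne h

end Normed

theorem stmt14_general {X : Type*} [NormedAddCommGroup X] [NormedSpace ℝ X] :
    LocallyOctahedral X ↔ gprime X = 2 :=
  ⟨LocallyOctahedral.gprime_eq_two, locallyOctahedral_of_gprime_eq_two⟩

theorem stmt14 {X : Type*} [NormedAddCommGroup X] [NormedSpace ℝ X] [CompleteSpace X]
    (hinf : ¬ FiniteDimensional ℝ X) :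
    LocallyOctahedral X ↔ gprime X = 2 :=
  stmt14_general
end

section
/- If the norm on a Banach space X is weakly octahedral, then whenever closed balls B(x₁,r₁),…,B(xₙ,rₙ) cover S_X, for every norm-one functional x* ∈ S_{X*} there exists an index i such that |x*(x - xᵢ)| ≤ rᵢ for all x ∈ S_X. -/
/-! If no ball worked for `f`, every radius would satisfy `rᵢ < |f xᵢ| + 1`, since
`|f (z - xᵢ)| ≤ 1 + |f xᵢ|` on the unit sphere. Weak octahedrality applied to the span of the
centres with a small `ε` then produces a unit vector `y` with `‖xᵢ - y‖ > rᵢ` for every `i`,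
so the balls miss `y`. -/

open Metric

def WeaklyOctahedral (X : Type*) [NormedAddCommGroup X] [NormedSpace ℝ X] : Prop :=
  ∀ (E : Submodule ℝ X), FiniteDimensional ℝ E → ∀ f : X →L[ℝ] ℝ, ‖f‖ ≤ 1 →
    ∀ ε : ℝ, 0 < ε →
      ∃ y : X, ‖y‖ = 1 ∧ ∀ x ∈ E, (1 - ε) * (|f x| + ‖y‖) ≤ ‖x - y‖

open Filter Topology

lemma exists_pos_forall_lt_one_sub_mul {ι : Type*} [Finite ι] {a c : ι → ℝ}
    (h : ∀ i, c i < a i) : ∃ ε > 0, ∀ i, c i < (1 - ε) * a i := by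
  have hev : ∀ i, ∀ᶠ ε in 𝓝[>] (0 : ℝ), c i < (1 - ε) * a i := fun i => by
    have hcont : Continuous fun ε : ℝ => (1 - ε) * a i := by fun_prop
    have hlim := (hcont.tendsto 0).eventually (lt_mem_nhds (by simpa using h i))
    exact nhdsWithin_le_nhds hlim
  obtain ⟨ε, hlt, hε⟩ := ((eventually_all.2 hev).and self_mem_nhdsWithin).exists
  exact ⟨ε, hε, hlt⟩

lemma WeaklyOctahedral.exists_norm_eq_one_forall_lt_norm_sub {X : Type*}
    [NormedAddCommGroup X] [NormedSpace ℝ X] (hX : WeaklyOctahedral X)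
    {ι : Type*} [Finite ι] (x : ι → X) {f : X →L[ℝ] ℝ} (hf : ‖f‖ ≤ 1) {c : ι → ℝ}
    (hc : ∀ i, c i < |f (x i)| + 1) : ∃ y : X, ‖y‖ = 1 ∧ ∀ i, c i < ‖x i - y‖ := by
  obtain ⟨ε, hε, hcε⟩ := exists_pos_forall_lt_one_sub_mul hc
  obtain ⟨y, hy, hfar⟩ := hX (Submodule.span ℝ (Set.range x))
    (FiniteDimensional.span_of_finite ℝ (Set.finite_range x)) f hf ε hε
  refine ⟨y, hy, fun i => ?_⟩
  have := hfar (x i) (Submodule.subset_span ⟨i, rfl⟩)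
  rw [hy] at this
  linarith [hcε i]

lemma ContinuousLinearMap.abs_apply_sub_le {X : Type*} [NormedAddCommGroup X] [NormedSpace ℝ X]
    {f : X →L[ℝ] ℝ} (hf : ‖f‖ ≤ 1) {z : X} (hz : ‖z‖ = 1) (x : X) :
    |f (z - x)| ≤ |f x| + 1 := by
  have hfz : |f z| ≤ 1 := by
    calc |f z| ≤ ‖f‖ * ‖z‖ := f.le_opNorm z
      _ ≤ 1 := by rw [hz, mul_one]; exact hf
  calc |f (z - x)| = |f z - f x| := by rw [map_sub]
    _ ≤ |f z| + |f x| := abs_sub _ _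
    _ ≤ |f x| + 1 := by linarith

theorem stmt15_general {X : Type*} [NormedAddCommGroup X] [NormedSpace ℝ X]
    (hwoh : WeaklyOctahedral X) (n : ℕ) (x : Fin n → X) (r : Fin n → ℝ)
    (hcov : sphere (0 : X) 1 ⊆ ⋃ i, closedBall (x i) (r i))
    (f : X →L[ℝ] ℝ) (hf : ‖f‖ = 1) :
    ∃ i, ∀ z ∈ sphere (0 : X) 1, |f (z - x i)| ≤ r i := by
  by_contra! hfar
  have hr : ∀ i, r i < |f (x i)| + 1 := fun i => by
    obtain ⟨z, hz, hlt⟩ := hfar i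
    exact hlt.trans_le (f.abs_apply_sub_le hf.le (mem_sphere_zero_iff_norm.1 hz) (x i))
  obtain ⟨y, hy, hy_far⟩ := hwoh.exists_norm_eq_one_forall_lt_norm_sub x hf.le hr
  obtain ⟨i, hi⟩ := Set.mem_iUnion.1 (hcov (mem_sphere_zero_iff_norm.2 hy))
  rw [mem_closedBall, dist_eq_norm, ← norm_neg, neg_sub] at hi
  exact (hy_far i).not_ge hi

theorem stmt15 {X : Type*} [NormedAddCommGroup X] [NormedSpace ℝ X] [CompleteSpace X]
    (hwoh : WeaklyOctahedral X) (n : ℕ) (x : Fin n → X) (r : Fin n → ℝ) (hr : ∀ i, 0 < r i)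
    (hcov : sphere (0 : X) 1 ⊆ ⋃ i, closedBall (x i) (r i))
    (f : X →L[ℝ] ℝ) (hf : ‖f‖ = 1) :
    ∃ i, ∀ z ∈ sphere (0 : X) 1, |f (z - x i)| ≤ r i :=
  stmt15_general hwoh n x r hcov f hf
end

section
/- For any infinite-dimensional Banach space X, the Whitley thickness constant satisfies 1 ≤ T(X) ≤ 2. -/
/-! A single unit vector `x₀` is already a `2`-net of the sphere, since
`‖y - x₀‖ ≤ ‖y‖ + ‖x₀‖ = 2`. Conversely, if finitely many unit vectors formed an `ε`-net with
`ε < 1`, their span `F` would be a proper closed subspace, and Riesz's lemma yields a unit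
vector at distance more than `ε` from `F`, hence from every point of the net. -/

open Metric

noncomputable def thickness (X : Type*) [NormedAddCommGroup X] : ℝ :=
  sInf {ε : ℝ | 0 < ε ∧ ∃ s : Finset X, s.Nonempty ∧ (∀ x ∈ s, ‖x‖ = 1) ∧
    Metric.sphere (0 : X) 1 ⊆ ⋃ x ∈ s, Metric.closedBall x ε}

def thicknessRadii (X : Type*) [NormedAddCommGroup X] : Set ℝ :=
  {ε : ℝ | 0 < ε ∧ ∃ s : Finset X, s.Nonempty ∧ (∀ x ∈ s, ‖x‖ = 1) ∧
    sphere (0 : X) 1 ⊆ ⋃ x ∈ s, closedBall x ε}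

theorem thickness_eq_sInf_thicknessRadii (X : Type*) [NormedAddCommGroup X] :
    thickness X = sInf (thicknessRadii X) := rfl

theorem thicknessRadii_bddBelow (X : Type*) [NormedAddCommGroup X] :
    BddBelow (thicknessRadii X) :=
  ⟨0, fun _ hε => hε.1.le⟩

theorem two_mem_thicknessRadii (X : Type*) [NormedAddCommGroup X] [NormedSpace ℝ X]
    [Nontrivial X] : (2 : ℝ) ∈ thicknessRadii X := by
  obtain ⟨x₀, hx₀⟩ := exists_norm_eq X zero_le_one
  refine ⟨two_pos, {x₀}, Finset.singleton_nonempty _, by simpa using hx₀, fun y hy => ?_⟩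
  rw [mem_sphere_zero_iff_norm] at hy
  refine Set.mem_biUnion (Finset.mem_singleton_self x₀) (mem_closedBall.mpr ?_)
  calc dist y x₀ = ‖y - x₀‖ := dist_eq_norm y x₀
    _ ≤ ‖y‖ + ‖x₀‖ := norm_sub_le y x₀
    _ = 2 := by rw [hy, hx₀]; norm_num

theorem exists_norm_eq_one_forall_le_norm_sub_of_finset {𝕜 X : Type*} [RCLike 𝕜]
    [NormedAddCommGroup X] [NormedSpace 𝕜 X] (hinf : ¬ FiniteDimensional 𝕜 X) (s : Finset X)
    {r : ℝ} (hr : r < 1) : ∃ x : X, ‖x‖ = 1 ∧ ∀ y ∈ s, r ≤ ‖x - y‖ := by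
  set F := Submodule.span 𝕜 (s : Set X)
  have hF : ∃ x : X, x ∉ F := by
    by_contra! h
    exact hinf <| Module.Finite.of_surjective F.subtype fun x => ⟨⟨x, h x⟩, rfl⟩
  obtain ⟨x, -, hx, hfar⟩ := riesz_lemma_of_lt_one F.closed_of_finiteDimensional hF hr
  exact ⟨x, hx, fun y hy => hfar y (Submodule.subset_span hy)⟩

theorem one_le_of_mem_thicknessRadii {𝕜 X : Type*} [RCLike 𝕜] [NormedAddCommGroup X]
    [NormedSpace 𝕜 X] (hinf : ¬ FiniteDimensional 𝕜 X) {ε : ℝ} (hε : ε ∈ thicknessRadii X) :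
    1 ≤ ε := by
  obtain ⟨-, s, -, -, hcover⟩ := hε
  by_contra! hε1
  obtain ⟨r, hεr, hr1⟩ := exists_between hε1
  obtain ⟨x, hx, hfar⟩ := exists_norm_eq_one_forall_le_norm_sub_of_finset hinf s hr1
  obtain ⟨y, hy, hxy⟩ := Set.mem_iUnion₂.mp (hcover (mem_sphere_zero_iff_norm.mpr hx))
  rw [mem_closedBall, dist_eq_norm] at hxy
  linarith [hfar y hy]

theorem stmt19_general {X : Type*} [NormedAddCommGroup X] [NormedSpace ℝ X]
    (hinf : ¬ FiniteDimensional ℝ X) :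
    1 ≤ thickness X ∧ thickness X ≤ 2 := by
  have : Nontrivial X := by
    by_contra! h
    exact hinf inferInstance
  rw [thickness_eq_sInf_thicknessRadii]
  exact ⟨le_csInf ⟨2, two_mem_thicknessRadii X⟩ fun _ => one_le_of_mem_thicknessRadii hinf,
    csInf_le (thicknessRadii_bddBelow X) (two_mem_thicknessRadii X)⟩

theorem stmt19 {X : Type*} [NormedAddCommGroup X] [NormedSpace ℝ X] [CompleteSpace X]
    (hinf : ¬ FiniteDimensional ℝ X) :
    1 ≤ thickness X ∧ thickness X ≤ 2 :=
  stmt19_general hinf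
end
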